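/- arXiv:1711.08051 — 2 statements merged into one kernel-verified Lean document; each statement's English description precedes it below -/
import Mathlib

section
/- Let 0 < a < b, let g : [a,b] → ℝ be harmonically convex and f : [a,b] → ℝ be symmetrized harmonically convex, both integrable on [a,b]. Then ((f(a)+f(b))/2)·(ab/(b-a))∫_a^b g(t)/t² dt + ((g(a)+g(b))/2)·(ab/(b-a))∫_a^b f(t)/t² dt − ((f(a)+f(b))/2)·((g(a)+g(b))/2) ≤ (ab/(b-a)) ∫_a^b f̆(t) g(t)/t² dt, where f̆(t) = (1/2)[f(t) + f(abt/((a+b)t - ab))]. -/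
open intervalIntegral

noncomputable def symTransform (a b : ℝ) (f : ℝ → ℝ) (t : ℝ) : ℝ :=
  (1/2) * (f t + f (a * b * t / ((a + b) * t - a * b)))

/-!
The map `τ t = abt / ((a + b) t - ab)` satisfies `1 / τ t = 1 / a + 1 / b - 1 / t`: it is the
reflection of `[a, b]` in the harmonic sense, an involution preserving the measure `dt / t²`.
Hence replacing an integrand `h` by its symmetrization `(h + h ∘ τ) / 2` does not change
`∫ h t / t² dt`. Harmonic convexity and `f̆ a = f̆ b = (f a + f b) / 2` give `f̆ ≤ (f a + f b) / 2`,
and `g + g ∘ τ ≤ g a + g b`, i.e. `ğ ≤ (g a + g b) / 2` for the symmetrization `ğ` of `g`. So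
`((f a + f b) / 2 - f̆) ((g a + g b) / 2 - ğ) ≥ 0` on `[a, b]`; since `f̆ ∘ τ = f̆`, integrating
this product against `dt / t²` gives the inequality.
-/

open MeasureTheory Set

noncomputable def harmonicReflection (a b t : ℝ) : ℝ := a * b * t / ((a + b) * t - a * b)

section Reflection

variable {a b t : ℝ}

lemma harmonicReflection_denom_pos (ha : 0 < a) (hab : a ≤ b) (ht : a ≤ t) :
    0 < (a + b) * t - a * b := by
  nlinarith [mul_pos ha (ha.trans_le ht)]

lemma harmonicReflection_mem_Icc (ha : 0 < a) (hab : a ≤ b) (ht : t ∈ Icc a b) :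
    harmonicReflection a b t ∈ Icc a b := by
  have hd := harmonicReflection_denom_pos ha hab ht.1
  constructor
  · rw [harmonicReflection, le_div_iff₀ hd]
    nlinarith [mul_nonneg (mul_pos ha ha).le (sub_nonneg.2 ht.2)]
  · rw [harmonicReflection, div_le_iff₀ hd]
    nlinarith [mul_nonneg (mul_pos (ha.trans_le hab) (ha.trans_le hab)).le (sub_nonneg.2 ht.1)]

lemma harmonicReflection_harmonicReflection (ha : 0 < a) (hab : a ≤ b) (ht : a ≤ t) :
    harmonicReflection a b (harmonicReflection a b t) = t := by
  have hd := (harmonicReflection_denom_pos ha hab ht).ne'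
  have hb : b ≠ 0 := (ha.trans_le hab).ne'
  have ha' : a ≠ 0 := ha.ne'
  have key : (a + b) * harmonicReflection a b t - a * b = (a * b) ^ 2 / ((a + b) * t - a * b) := by
    unfold harmonicReflection
    field_simp
    ring
  rw [harmonicReflection, key, harmonicReflection, div_div_eq_mul_div, mul_assoc,
    div_mul_cancel₀ _ hd]
  field_simp

lemma harmonicReflection_bijOn (ha : 0 < a) (hab : a ≤ b) :
    BijOn (harmonicReflection a b) (Icc a b) (Icc a b) := by
  have hinv : LeftInvOn (harmonicReflection a b) (harmonicReflection a b) (Icc a b) :=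
    fun t ht => harmonicReflection_harmonicReflection ha hab ht.1
  have hmaps : MapsTo (harmonicReflection a b) (Icc a b) (Icc a b) :=
    fun t ht => harmonicReflection_mem_Icc ha hab ht
  exact InvOn.bijOn ⟨hinv, hinv⟩ hmaps hmaps

lemma hasDerivAt_harmonicReflection (ha : 0 < a) (hab : a ≤ b) (ht : a ≤ t) :
    HasDerivAt (harmonicReflection a b) (-(a * b) ^ 2 / ((a + b) * t - a * b) ^ 2) t := by
  have hd := harmonicReflection_denom_pos ha hab ht
  have hnum : HasDerivAt (fun t : ℝ => a * b * t) (a * b) t := by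
    simpa using (hasDerivAt_id t).const_mul (a * b)
  have hden : HasDerivAt (fun t : ℝ => (a + b) * t - a * b) (a + b) t := by
    simpa using ((hasDerivAt_id t).const_mul (a + b)).sub_const (a * b)
  exact (hnum.div hden hd.ne').congr_deriv (by ring)

/-- The Jacobian identity saying that `harmonicReflection a b` preserves `dt / t²`. -/
lemma abs_deriv_harmonicReflection_mul (ha : 0 < a) (hab : a ≤ b) (ht : a ≤ t) (y : ℝ) :
    |-(a * b) ^ 2 / ((a + b) * t - a * b) ^ 2| * (y / harmonicReflection a b t ^ 2) =
      y / t ^ 2 := by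
  have hd := (harmonicReflection_denom_pos ha hab ht).ne'
  have ht0 : t ≠ 0 := (ha.trans_le ht).ne'
  have hb : b ≠ 0 := (ha.trans_le hab).ne'
  rw [neg_div, abs_neg, abs_of_nonneg (by positivity), harmonicReflection]
  field_simp

lemma integral_comp_harmonicReflection_div_sq (ha : 0 < a) (hab : a ≤ b) (h : ℝ → ℝ) :
    ∫ t in a..b, h (harmonicReflection a b t) / t ^ 2 = ∫ t in a..b, h t / t ^ 2 := by
  have hbij := harmonicReflection_bijOn ha hab
  have := integral_image_eq_integral_abs_deriv_smul measurableSet_Icc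
    (fun t ht => (hasDerivAt_harmonicReflection ha hab ht.1).hasDerivWithinAt) hbij.injOn
    (fun t => h t / t ^ 2)
  rw [hbij.image_eq] at this
  simp only [integral_of_le hab, ← integral_Icc_eq_integral_Ioc, this]
  refine setIntegral_congr_fun measurableSet_Icc fun t ht => ?_
  exact (abs_deriv_harmonicReflection_mul ha hab ht.1 _).symm

lemma IntervalIntegrable.comp_harmonicReflection_div_sq (ha : 0 < a) (hab : a ≤ b)
    {h : ℝ → ℝ} (hh : IntervalIntegrable (fun t => h t / t ^ 2) volume a b) :
    IntervalIntegrable (fun t => h (harmonicReflection a b t) / t ^ 2) volume a b := by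
  have hbij := harmonicReflection_bijOn ha hab
  have := integrableOn_image_iff_integrableOn_abs_deriv_smul measurableSet_Icc
    (fun t ht => (hasDerivAt_harmonicReflection ha hab ht.1).hasDerivWithinAt) hbij.injOn
    (fun t => h t / t ^ 2)
  rw [hbij.image_eq] at this
  rw [intervalIntegrable_iff_integrableOn_Icc_of_le hab] at hh ⊢
  refine (this.1 hh).congr_fun (fun t ht => ?_) measurableSet_Icc
  exact abs_deriv_harmonicReflection_mul ha hab ht.1 _

lemma IntervalIntegrable.div_sq (ha : 0 < a) (hab : a ≤ b) {h : ℝ → ℝ}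
    (hh : IntervalIntegrable h volume a b) :
    IntervalIntegrable (fun t => h t / t ^ 2) volume a b := by
  have hcont : ContinuousOn (fun t : ℝ => (t ^ 2)⁻¹) (uIcc a b) := by
    refine continuousOn_id.pow 2 |>.inv₀ fun t ht => ?_
    rw [uIcc_of_le hab] at ht
    exact pow_ne_zero 2 (ha.trans_le ht.1).ne'
  simpa only [div_eq_mul_inv] using hh.mul_continuousOn hcont

lemma integral_one_div_sq (ha : 0 < a) (hab : a ≤ b) :
    ∫ t in a..b, 1 / t ^ 2 = 1 / a - 1 / b := by
  have hderiv : ∀ t ∈ uIcc a b, HasDerivAt (fun t : ℝ => -t⁻¹) (1 / t ^ 2) t := fun t ht => by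
    rw [uIcc_of_le hab] at ht
    simpa using (hasDerivAt_inv (ha.trans_le ht.1).ne').fun_neg
  rw [integral_eq_sub_of_hasDerivAt hderiv (intervalIntegrable_const.div_sq ha hab)]
  ring

end Reflection

lemma symTransform_eq (a b : ℝ) (f : ℝ → ℝ) (t : ℝ) :
    symTransform a b f t = (f t + f (harmonicReflection a b t)) / 2 := by
  rw [symTransform, harmonicReflection]
  ring

section SymTransform

variable {a b t : ℝ} {f : ℝ → ℝ}

lemma symTransform_harmonicReflection (ha : 0 < a) (hab : a ≤ b) (ht : a ≤ t) :
    symTransform a b f (harmonicReflection a b t) = symTransform a b f t := by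
  rw [symTransform_eq, symTransform_eq, harmonicReflection_harmonicReflection ha hab ht, add_comm]

lemma harmonicReflection_left (ha : a ≠ 0) : harmonicReflection a b a = b := by
  rw [harmonicReflection, show (a + b) * a - a * b = a * a by ring]
  field_simp

lemma harmonicReflection_right (hb : b ≠ 0) : harmonicReflection a b b = a := by
  rw [harmonicReflection, show (a + b) * b - a * b = b * b by ring]
  field_simp

lemma symTransform_left (ha : a ≠ 0) : symTransform a b f a = (f a + f b) / 2 := by
  rw [symTransform_eq, harmonicReflection_left ha]

lemma symTransform_right (hb : b ≠ 0) : symTransform a b f b = (f a + f b) / 2 := by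
  rw [symTransform_eq, harmonicReflection_right hb, add_comm]

lemma symTransform_div_sq (a b : ℝ) (f : ℝ → ℝ) :
    (fun t => symTransform a b f t / t ^ 2) =
      fun t => (f t / t ^ 2 + f (harmonicReflection a b t) / t ^ 2) / 2 := by
  ext t
  rw [symTransform_eq]
  ring

lemma IntervalIntegrable.symTransform_div_sq (ha : 0 < a) (hab : a ≤ b)
    (hf : IntervalIntegrable (fun t => f t / t ^ 2) volume a b) :
    IntervalIntegrable (fun t => symTransform a b f t / t ^ 2) volume a b := by
  rw [_root_.symTransform_div_sq]
  exact (hf.add (hf.comp_harmonicReflection_div_sq ha hab)).div_const 2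

lemma integral_symTransform_div_sq (ha : 0 < a) (hab : a ≤ b)
    (hf : IntervalIntegrable (fun t => f t / t ^ 2) volume a b) :
    ∫ t in a..b, symTransform a b f t / t ^ 2 = ∫ t in a..b, f t / t ^ 2 := by
  rw [symTransform_div_sq, intervalIntegral.integral_div,
    integral_add hf (hf.comp_harmonicReflection_div_sq ha hab),
    integral_comp_harmonicReflection_div_sq ha hab]
  ring

end SymTransform

def HarmonicConvexOn (s : Set ℝ) (g : ℝ → ℝ) : Prop :=
  ∀ x ∈ s, ∀ y ∈ s, ∀ l ∈ Icc (0 : ℝ) 1,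
    g (x * y / (l * x + (1 - l) * y)) ≤ (1 - l) * g x + l * g y

section HarmonicConvex

variable {a b t : ℝ} {g : ℝ → ℝ}

lemma exists_harmonicCombination_eq (ha : 0 < a) (hab : a < b) (ht : t ∈ Icc a b) :
    ∃ l ∈ Icc (0 : ℝ) 1, a * b / (l * a + (1 - l) * b) = t ∧
      a * b / ((1 - l) * a + (1 - (1 - l)) * b) = harmonicReflection a b t := by
  have ht0 : 0 < t := ha.trans_le ht.1
  have hba : 0 < b - a := sub_pos.2 hab
  have hab0 : a * b ≠ 0 := (mul_pos ha (ha.trans hab)).ne'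
  set l := b * (t - a) / (t * (b - a)) with hl
  have hl₁ : l * a + (1 - l) * b = a * b / t := by
    rw [hl]
    field_simp
    ring
  have hl₂ : (1 - l) * a + (1 - (1 - l)) * b = ((a + b) * t - a * b) / t := by
    rw [hl]
    field_simp
    ring
  refine ⟨l, ⟨div_nonneg (mul_nonneg (ha.trans hab).le (sub_nonneg.2 ht.1)) (by positivity),
    ?_⟩, ?_, ?_⟩
  · rw [div_le_one (by positivity)]
    nlinarith [ht.2]
  · rw [hl₁, div_div_eq_mul_div, mul_div_cancel_left₀ t hab0]
  · rw [hl₂, harmonicReflection, div_div_eq_mul_div]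

namespace HarmonicConvexOn

lemma le_max (hg : HarmonicConvexOn (Icc a b) g) (ha : 0 < a) (hab : a < b)
    (ht : t ∈ Icc a b) : g t ≤ max (g a) (g b) := by
  obtain ⟨l, hl, hlt, -⟩ := exists_harmonicCombination_eq ha hab ht
  have := hg a (left_mem_Icc.2 hab.le) b (right_mem_Icc.2 hab.le) l hl
  rw [hlt] at this
  nlinarith [le_max_left (g a) (g b), le_max_right (g a) (g b), hl.1, hl.2]

lemma add_apply_harmonicReflection_le (hg : HarmonicConvexOn (Icc a b) g) (ha : 0 < a)
    (hab : a < b) (ht : t ∈ Icc a b) : g t + g (harmonicReflection a b t) ≤ g a + g b := by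
  obtain ⟨l, hl, hlt, hlτ⟩ := exists_harmonicCombination_eq ha hab ht
  have ha' := left_mem_Icc.2 hab.le
  have hb' := right_mem_Icc.2 hab.le
  have h₁ := hg a ha' b hb' l hl
  have h₂ := hg a ha' b hb' (1 - l) ⟨by linarith [hl.2], by linarith [hl.1]⟩
  rw [hlt] at h₁
  rw [hlτ] at h₂
  linarith

end HarmonicConvexOn

end HarmonicConvex

lemma symTransform_mul_div_sq_ge {a b t A G : ℝ} {F g : ℝ → ℝ}
    (hFτ : F (harmonicReflection a b t) = F t) (hF : F t ≤ A)
    (hg : symTransform a b g t ≤ G) :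
    A * (symTransform a b g t / t ^ 2) + G * (F t / t ^ 2) - A * G * (1 / t ^ 2) ≤
      symTransform a b (fun s => F s * g s) t / t ^ 2 := by
  have hgap : symTransform a b (fun s => F s * g s) t / t ^ 2 -
      (A * (symTransform a b g t / t ^ 2) + G * (F t / t ^ 2) - A * G * (1 / t ^ 2)) =
      (A - F t) * (G - symTransform a b g t) / t ^ 2 := by
    simp only [symTransform_eq, hFτ]
    ring
  have : 0 ≤ (A - F t) * (G - symTransform a b g t) / t ^ 2 :=
    div_nonneg (mul_nonneg (sub_nonneg.2 hF) (sub_nonneg.2 hg)) (sq_nonneg t)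
  linarith

lemma le_integral_mul_div_sq {a b A G : ℝ} {F g : ℝ → ℝ} (ha : 0 < a) (hab : a ≤ b)
    (hF_int : IntervalIntegrable (fun t => F t / t ^ 2) volume a b)
    (hg_int : IntervalIntegrable (fun t => g t / t ^ 2) volume a b)
    (hFg_int : IntervalIntegrable (fun t => F t * g t / t ^ 2) volume a b)
    (hFτ : ∀ t ∈ Icc a b, F (harmonicReflection a b t) = F t)
    (hF : ∀ t ∈ Icc a b, F t ≤ A) (hg : ∀ t ∈ Icc a b, symTransform a b g t ≤ G) :
    A * (∫ t in a..b, g t / t ^ 2) + G * (∫ t in a..b, F t / t ^ 2) - A * G * (1 / a - 1 / b) ≤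
      ∫ t in a..b, F t * g t / t ^ 2 := by
  have hAg := (hg_int.symTransform_div_sq ha hab).const_mul A
  have hGF := hF_int.const_mul G
  have hAG := ((intervalIntegrable_const (c := (1 : ℝ))).div_sq ha hab).const_mul (A * G)
  have key := integral_mono_on hab ((hAg.add hGF).sub hAG) (hFg_int.symTransform_div_sq ha hab)
    fun t ht => symTransform_mul_div_sq_ge (hFτ t ht) (hF t ht) (hg t ht)
  rwa [intervalIntegral.integral_sub (hAg.add hGF) hAG, intervalIntegral.integral_add hAg hGF,
    intervalIntegral.integral_const_mul, intervalIntegral.integral_const_mul,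
    intervalIntegral.integral_const_mul, integral_symTransform_div_sq ha hab hg_int,
    integral_symTransform_div_sq ha hab hFg_int, integral_one_div_sq ha hab] at key

/-- Lower product inequality for a harmonically convex `g` and a symmetrized
harmonically convex `f`. -/
theorem product_inequality_lower (a b : ℝ) (f g : ℝ → ℝ)
    (ha : 0 < a) (hab : a < b)
    (hg : ∀ x ∈ Set.Icc a b, ∀ y ∈ Set.Icc a b, ∀ l ∈ Set.Icc (0:ℝ) 1,
      g (x * y / (l * x + (1 - l) * y)) ≤ (1 - l) * g x + l * g y)
    (hshc : ∀ x ∈ Set.Icc a b, ∀ y ∈ Set.Icc a b, ∀ l ∈ Set.Icc (0:ℝ) 1,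
      symTransform a b f (x * y / (l * x + (1 - l) * y)) ≤
        (1 - l) * symTransform a b f x + l * symTransform a b f y)
    (hfint : IntervalIntegrable f MeasureTheory.volume a b)
    (hgint : IntervalIntegrable g MeasureTheory.volume a b)
    (hprodint : IntervalIntegrable (fun t => symTransform a b f t * g t / t ^ 2)
      MeasureTheory.volume a b) :
    (f a + f b) / 2 * (a * b / (b - a) * ∫ t in a..b, g t / t ^ 2) +
        (g a + g b) / 2 * (a * b / (b - a) * ∫ t in a..b, f t / t ^ 2) -
        (f a + f b) / 2 * ((g a + g b) / 2) ≤
      a * b / (b - a) * ∫ t in a..b, symTransform a b f t * g t / t ^ 2 := by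
  have hb : b ≠ 0 := (ha.trans hab).ne'
  have hF : ∀ t ∈ Icc a b, symTransform a b f t ≤ (f a + f b) / 2 := fun t ht => by
    simpa [symTransform_left ha.ne', symTransform_right hb] using
      HarmonicConvexOn.le_max hshc ha hab ht
  have hg_sym : ∀ t ∈ Icc a b, symTransform a b g t ≤ (g a + g b) / 2 := fun t ht => by
    rw [symTransform_eq]
    linarith [HarmonicConvexOn.add_apply_harmonicReflection_le hg ha hab ht]
  have hf₂ := hfint.div_sq ha hab.le
  have key := le_integral_mul_div_sq ha hab.le (hf₂.symTransform_div_sq ha hab.le)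
    (hgint.div_sq ha hab.le) hprodint
    (fun t ht => symTransform_harmonicReflection ha hab.le ht.1) hF hg_sym
  rw [integral_symTransform_div_sq ha hab.le hf₂] at key
  have hscale : a * b / (b - a) * (1 / a - 1 / b) = 1 := by
    field_simp
    exact div_self (sub_pos.2 hab).ne'
  have hpos : 0 ≤ a * b / (b - a) := (div_pos (mul_pos ha (ha.trans hab)) (sub_pos.2 hab)).le
  linear_combination (a * b / (b - a)) * key + (f a + f b) / 2 * ((g a + g b) / 2) * hscale
end

section
/- Let h : J → [0,∞) with (0,1) ⊆ J, h(1/2) > 0, h integrable on [0,1]. If f : [a,b] → [0,∞) (0 < a < b) is symmetrized harmonically h-convex and integrable on [a,b], then for any x, y ∈ [a,b] with x ≠ y: (1/(4h(1/2)))[f(2xy/(x+y)) + f(2abxy/(2xy(a+b) - ab(x+y)))] ≤ (xy/(2(y-x)))[∫_x^y f(t)/t² dt + ∫_{aby/((a+b)y-ab)}^{abx/((a+b)x-ab)} f(t)/t² dt] ≤ (1/2)[f(x) + f(abx/((a+b)x-ab)) + f(y) + f(aby/((a+b)y-ab))] ∫_0^1 h(t) dt. -/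
open intervalIntegral

/-!
In the coordinate `u = t⁻¹` everything becomes affine: the harmonic combination
`x * y / (l * x + (1 - l) * y)` becomes `l * y⁻¹ + (1 - l) * x⁻¹`, the map
`t ↦ a * b * t / ((a + b) * t - a * b)` becomes the reflection `u ↦ a⁻¹ + b⁻¹ - u` of
`[b⁻¹, a⁻¹]`, and `f t / t ^ 2 dt` becomes `f u⁻¹ du`. Hence `u ↦ symTransform a b f u⁻¹` is
h-convex on `[b⁻¹, a⁻¹]`, the middle term is its mean value over `[y⁻¹, x⁻¹]`, and the two
inequalities are the Hermite–Hadamard inequalities for h-convex functions: integrate the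
h-convexity inequality along the segment, pairing `l` with `1 - l` at weight `1 / 2` for the
lower bound.
-/

open MeasureTheory Set

def IsHConvexOn (h : ℝ → ℝ) (s : Set ℝ) (ψ : ℝ → ℝ) : Prop :=
  ∀ x ∈ s, ∀ y ∈ s, ∀ l ∈ Ioo (0 : ℝ) 1, ψ (l * x + (1 - l) * y) ≤ h l * ψ x + h (1 - l) * ψ y

def IsHarmonicallyHConvexOn (h : ℝ → ℝ) (s : Set ℝ) (F : ℝ → ℝ) : Prop :=
  ∀ x ∈ s, ∀ y ∈ s, ∀ l ∈ Ioo (0 : ℝ) 1,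
    F (x * y / (l * x + (1 - l) * y)) ≤ h l * F y + h (1 - l) * F x

theorem IsHConvexOn.mono {h ψ : ℝ → ℝ} {s t : Set ℝ} (hψ : IsHConvexOn h s ψ) (hts : t ⊆ s) :
    IsHConvexOn h t ψ :=
  fun x hx y hy l hl => hψ x (hts hx) y (hts hy) l hl

theorem IsHarmonicallyHConvexOn.comp_inv {h F : ℝ → ℝ} {s : Set ℝ}
    (hF : IsHarmonicallyHConvexOn h s F) (hs : (0 : ℝ) ∉ s) :
    IsHConvexOn h (Inv.inv '' s) (fun u => F u⁻¹) := by
  rintro _ ⟨x, hx, rfl⟩ _ ⟨y, hy, rfl⟩ l hl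
  have hx0 : x ≠ 0 := ne_of_mem_of_not_mem hx hs
  have hy0 : y ≠ 0 := ne_of_mem_of_not_mem hy hs
  have key : (l * x⁻¹ + (1 - l) * y⁻¹)⁻¹ = y * x / (l * y + (1 - l) * x) := by
    field_simp
  simpa only [key, inv_inv] using hF y hy x hx l hl

theorem mul_add_one_sub_mul_mem_uIcc {p q l : ℝ} (hl : l ∈ Icc (0 : ℝ) 1) :
    l * p + (1 - l) * q ∈ uIcc p q := by
  rw [← segment_eq_uIcc]
  exact ⟨l, 1 - l, hl.1, by linarith [hl.2], by ring, by simp⟩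

theorem IntervalIntegrable.comp_mul_add_one_sub_mul {ψ : ℝ → ℝ} {p q : ℝ}
    (hψ : IntervalIntegrable ψ volume p q) (hpq : p ≠ q) :
    IntervalIntegrable (fun l => ψ (l * p + (1 - l) * q)) volume 0 1 := by
  have h1 := (hψ.comp_add_right q).comp_mul_left (c := p - q)
  simp only [sub_self, zero_div, div_self (sub_ne_zero.2 hpq)] at h1
  simpa only [show ∀ l, (p - q) * l + q = l * p + (1 - l) * q from fun l => by ring] using h1.symm

theorem integral_comp_mul_add_one_sub_mul (ψ : ℝ → ℝ) {p q : ℝ} (hpq : p ≠ q) :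
    ∫ l in (0 : ℝ)..1, ψ (l * p + (1 - l) * q) = (q - p)⁻¹ * ∫ u in p..q, ψ u := by
  simp only [show ∀ l, l * p + (1 - l) * q = (p - q) * l + q from fun l => by ring]
  rw [integral_comp_mul_add _ (sub_ne_zero.2 hpq), integral_symm, smul_eq_mul, ← neg_sub q p,
    inv_neg]
  simp

theorem IntervalIntegrable.comp_one_sub {g : ℝ → ℝ} (hg : IntervalIntegrable g volume 0 1) :
    IntervalIntegrable (fun l => g (1 - l)) volume 0 1 := by
  simpa using (hg.comp_sub_left 1).symm

theorem integral_comp_one_sub (g : ℝ → ℝ) :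
    ∫ l in (0 : ℝ)..1, g (1 - l) = ∫ l in (0 : ℝ)..1, g l := by
  simp [integral_comp_sub_left]

section HermiteHadamard

variable {h ψ : ℝ → ℝ} {p q : ℝ}

theorem IsHConvexOn.le_two_mul_average (hψ : IsHConvexOn h (uIcc p q) ψ)
    (hint : IntervalIntegrable ψ volume p q) (hpq : p ≠ q) :
    ψ ((p + q) / 2) ≤ 2 * h (1 / 2) * ((q - p)⁻¹ * ∫ u in p..q, ψ u) := by
  set g : ℝ → ℝ := fun l => ψ (l * p + (1 - l) * q)
  have hg : IntervalIntegrable g volume 0 1 := hint.comp_mul_add_one_sub_mul hpq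
  have hmid : ∀ l ∈ Icc (0 : ℝ) 1,
      ψ ((p + q) / 2) ≤ h (1 / 2) * g l + h (1 / 2) * g (1 - l) := by
    intro l hl
    have hl' : 1 - l ∈ Icc (0 : ℝ) 1 := ⟨by linarith [hl.2], by linarith [hl.1]⟩
    have := hψ _ (mul_add_one_sub_mul_mem_uIcc hl) _ (mul_add_one_sub_mul_mem_uIcc hl') (1 / 2)
      ⟨by norm_num, by norm_num⟩
    rwa [show (1 : ℝ) - 1 / 2 = 1 / 2 by norm_num, show 1 / 2 * (l * p + (1 - l) * q) +
      1 / 2 * ((1 - l) * p + (1 - (1 - l)) * q) = (p + q) / 2 by ring] at this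
  calc ψ ((p + q) / 2) = ∫ _ in (0 : ℝ)..1, ψ ((p + q) / 2) := by simp
    _ ≤ ∫ l in (0 : ℝ)..1, (h (1 / 2) * g l + h (1 / 2) * g (1 - l)) :=
      integral_mono_on zero_le_one intervalIntegrable_const
        ((hg.const_mul _).add (hg.comp_one_sub.const_mul _)) hmid
    _ = 2 * h (1 / 2) * ∫ l in (0 : ℝ)..1, g l := by
      rw [integral_add (hg.const_mul _) (hg.comp_one_sub.const_mul _),
        intervalIntegral.integral_const_mul, intervalIntegral.integral_const_mul,
        integral_comp_one_sub g]
      ring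
    _ = _ := by rw [integral_comp_mul_add_one_sub_mul ψ hpq]

theorem IsHConvexOn.average_le (hψ : IsHConvexOn h (uIcc p q) ψ)
    (hint : IntervalIntegrable ψ volume p q) (hh : IntervalIntegrable h volume 0 1) (hpq : p ≠ q) :
    (q - p)⁻¹ * ∫ u in p..q, ψ u ≤ (ψ p + ψ q) * ∫ l in (0 : ℝ)..1, h l := by
  calc (q - p)⁻¹ * ∫ u in p..q, ψ u = ∫ l in (0 : ℝ)..1, ψ (l * p + (1 - l) * q) :=
        (integral_comp_mul_add_one_sub_mul ψ hpq).symm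
    _ ≤ ∫ l in (0 : ℝ)..1, (h l * ψ p + h (1 - l) * ψ q) :=
      integral_mono_on_of_le_Ioo zero_le_one (hint.comp_mul_add_one_sub_mul hpq)
        ((hh.mul_const _).add (hh.comp_one_sub.mul_const _)) fun l hl =>
          hψ p left_mem_uIcc q right_mem_uIcc l hl
    _ = (ψ p + ψ q) * ∫ l in (0 : ℝ)..1, h l := by
      rw [integral_add (hh.mul_const _) (hh.comp_one_sub.mul_const _),
        intervalIntegral.integral_mul_const, intervalIntegral.integral_mul_const,
        integral_comp_one_sub h]
      ring

end HermiteHadamard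

theorem inv_mem_Icc_inv {a b x : ℝ} (ha : 0 < a) (hx : x ∈ Icc a b) : x⁻¹ ∈ Icc b⁻¹ a⁻¹ :=
  ⟨inv_anti₀ (ha.trans_le hx.1) hx.2, inv_anti₀ ha hx.1⟩

theorem image_inv_Icc_of_pos {a b : ℝ} (ha : 0 < a) (hb : 0 < b) :
    Inv.inv '' Icc a b = Icc b⁻¹ a⁻¹ := by
  refine Subset.antisymm (image_subset_iff.2 fun x hx => inv_mem_Icc_inv ha hx) fun u hu => ?_
  exact ⟨u⁻¹, by simpa using inv_mem_Icc_inv (inv_pos.2 hb) hu, inv_inv u⟩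

theorem setIntegral_Icc_comp_inv {a b : ℝ} (ha : 0 < a) (hb : 0 < b) (f : ℝ → ℝ) :
    ∫ u in Icc b⁻¹ a⁻¹, f u⁻¹ = ∫ t in Icc a b, f t / t ^ 2 := by
  have hderiv : ∀ t ∈ Icc a b, HasDerivWithinAt Inv.inv (-(t ^ 2)⁻¹) (Icc a b) t :=
    fun t ht => (hasDerivAt_inv (ha.trans_le ht.1).ne').hasDerivWithinAt
  rw [← image_inv_Icc_of_pos ha hb, integral_image_eq_integral_abs_deriv_smul measurableSet_Icc
    hderiv inv_injective.injOn]
  refine setIntegral_congr_fun measurableSet_Icc fun t _ => ?_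
  simp [div_eq_inv_mul]

theorem integrableOn_Icc_comp_inv {a b : ℝ} (ha : 0 < a) (hb : 0 < b) {f : ℝ → ℝ}
    (hf : IntegrableOn (fun t => f t / t ^ 2) (Icc a b)) :
    IntegrableOn (fun u => f u⁻¹) (Icc b⁻¹ a⁻¹) := by
  have hderiv : ∀ t ∈ Icc a b, HasDerivWithinAt Inv.inv (-(t ^ 2)⁻¹) (Icc a b) t :=
    fun t ht => (hasDerivAt_inv (ha.trans_le ht.1).ne').hasDerivWithinAt
  rw [← image_inv_Icc_of_pos ha hb, integrableOn_image_iff_integrableOn_abs_deriv_smul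
    measurableSet_Icc hderiv inv_injective.injOn]
  refine hf.congr_fun (fun t _ => ?_) measurableSet_Icc
  simp [div_eq_inv_mul]

theorem integral_comp_inv {x y : ℝ} (hx : 0 < x) (hy : 0 < y) (f : ℝ → ℝ) :
    ∫ u in y⁻¹..x⁻¹, f u⁻¹ = ∫ t in x..y, f t / t ^ 2 := by
  wlog hxy : x ≤ y generalizing x y
  · rw [integral_symm, this hy hx (le_of_not_ge hxy), integral_symm, neg_neg]
  rw [integral_of_le (inv_anti₀ hx hxy), integral_of_le hxy, ← integral_Icc_eq_integral_Ioc,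
    ← integral_Icc_eq_integral_Ioc, setIntegral_Icc_comp_inv hx hy]

theorem mul_mul_div_eq_inv_add_inv_sub_inv {a b t : ℝ} (ha : a ≠ 0) (hb : b ≠ 0) (ht : t ≠ 0) :
    a * b * t / ((a + b) * t - a * b) = (a⁻¹ + b⁻¹ - t⁻¹)⁻¹ := by
  rw [show a⁻¹ + b⁻¹ - t⁻¹ = ((a + b) * t - a * b) / (a * b * t) by field_simp; ring, inv_div]

theorem symTransform_inv {a b u : ℝ} (ha : a ≠ 0) (hb : b ≠ 0) (hu : u ≠ 0) (f : ℝ → ℝ) :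
    symTransform a b f u⁻¹ = (1 / 2) * (f u⁻¹ + f (a⁻¹ + b⁻¹ - u)⁻¹) := by
  rw [symTransform, mul_mul_div_eq_inv_add_inv_sub_inv ha hb (inv_ne_zero hu), inv_inv]

theorem IntervalIntegrable.comp_inv {a b : ℝ} {f : ℝ → ℝ} (ha : 0 < a) (hab : a ≤ b)
    (hf : IntervalIntegrable f volume a b) :
    IntervalIntegrable (fun u => f u⁻¹) volume b⁻¹ a⁻¹ := by
  have hcont : ContinuousOn (fun t : ℝ => (t ^ 2)⁻¹) (uIcc a b) :=
    (continuousOn_pow 2).inv₀ fun t ht => by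
      rw [uIcc_of_le hab] at ht
      exact pow_ne_zero 2 (ha.trans_le ht.1).ne'
  have hdiv := hf.mul_continuousOn hcont
  rw [intervalIntegrable_iff_integrableOn_Icc_of_le hab] at hdiv
  rw [intervalIntegrable_iff_integrableOn_Icc_of_le (inv_anti₀ ha hab)]
  exact integrableOn_Icc_comp_inv ha (ha.trans_le hab) (by simpa only [div_eq_mul_inv] using hdiv)

theorem uIcc_inv_subset_uIcc_inv {a b x y : ℝ} (ha : 0 < a) (hx : x ∈ Icc a b)
    (hy : y ∈ Icc a b) :
    uIcc y⁻¹ x⁻¹ ⊆ uIcc b⁻¹ a⁻¹ :=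
  uIcc_subset_uIcc (Icc_subset_uIcc (inv_mem_Icc_inv ha hy))
    (Icc_subset_uIcc (inv_mem_Icc_inv ha hx))

section Symmetrization

variable {a b : ℝ} {f : ℝ → ℝ}

theorem IntervalIntegrable.comp_inv_add_inv_sub_inv (ha : 0 < a) (hab : a ≤ b)
    (hf : IntervalIntegrable f volume a b) :
    IntervalIntegrable (fun u => f (a⁻¹ + b⁻¹ - u)⁻¹) volume b⁻¹ a⁻¹ := by
  simpa using ((hf.comp_inv ha hab).comp_sub_left (a⁻¹ + b⁻¹)).symm

theorem integral_div_sq_add_integral_div_sq_reflect (ha : 0 < a) (hab : a ≤ b)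
    (hf : IntervalIntegrable f volume a b) {x y : ℝ} (hx : x ∈ Icc a b) (hy : y ∈ Icc a b) :
    (∫ t in x..y, f t / t ^ 2) +
        (∫ t in (a * b * y / ((a + b) * y - a * b))..(a * b * x / ((a + b) * x - a * b)),
          f t / t ^ 2) =
      2 * ∫ u in y⁻¹..x⁻¹, symTransform a b f u⁻¹ := by
  have hb := ha.trans_le hab
  have hx0 := ha.trans_le hx.1
  have hy0 := ha.trans_le hy.1
  have hreflect_pos : ∀ t ∈ Icc a b, 0 < a⁻¹ + b⁻¹ - t⁻¹ := fun t ht => by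
    linarith [inv_pos.2 hb, inv_anti₀ ha ht.1]
  have hsub := uIcc_inv_subset_uIcc_inv ha hx hy
  have hpos : ∀ u ∈ uIcc y⁻¹ x⁻¹, u ≠ 0 := fun u hu =>
    ((lt_min (inv_pos.2 hy0) (inv_pos.2 hx0)).trans_le hu.1).ne'
  rw [mul_mul_div_eq_inv_add_inv_sub_inv ha.ne' hb.ne' hx0.ne',
    mul_mul_div_eq_inv_add_inv_sub_inv ha.ne' hb.ne' hy0.ne',
    ← integral_comp_inv (inv_pos.2 (hreflect_pos y hy)) (inv_pos.2 (hreflect_pos x hx)),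
    inv_inv, inv_inv,
    ← integral_comp_sub_left (fun u => f u⁻¹), ← integral_comp_inv hx0 hy0,
    ← integral_add ((hf.comp_inv ha hab).mono_set hsub)
      ((hf.comp_inv_add_inv_sub_inv ha hab).mono_set hsub),
    ← intervalIntegral.integral_const_mul]
  refine integral_congr fun u hu => ?_
  simp only [symTransform_inv ha.ne' hb.ne' (hpos u hu)]
  ring

theorem IntervalIntegrable.symTransform_comp_inv (ha : 0 < a) (hab : a ≤ b)
    (hf : IntervalIntegrable f volume a b) :
    IntervalIntegrable (fun u => symTransform a b f u⁻¹) volume b⁻¹ a⁻¹ := by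
  have hpos : ∀ u ∈ uIoc b⁻¹ a⁻¹, u ≠ 0 := fun u hu =>
    ((lt_min (inv_pos.2 (ha.trans_le hab)) (inv_pos.2 ha)).trans hu.1).ne'
  refine (((hf.comp_inv ha hab).add (hf.comp_inv_add_inv_sub_inv ha hab)).const_mul
    (1 / 2)).congr fun u hu => ?_
  simp only [symTransform_inv ha.ne' (ha.trans_le hab).ne' (hpos u hu)]

theorem symTransform_inv_add_inv_div_two_inv {x y : ℝ} (hx : 0 < x) (hy : 0 < y) :
    symTransform a b f ((y⁻¹ + x⁻¹) / 2)⁻¹ = 1 / 2 * (f (2 * x * y / (x + y)) +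
      f (2 * a * b * x * y / (2 * x * y * (a + b) - a * b * (x + y)))) := by
  have hm : ((y⁻¹ + x⁻¹) / 2)⁻¹ = 2 * x * y / (x + y) := by field_simp
  rw [symTransform, hm, ← mul_div_mul_left _ ((a + b) * (2 * x * y / (x + y)) - a * b)
    (add_pos hx hy).ne']
  congr 4 <;> field_simp

end Symmetrization

theorem hermite_hadamard_h_convex_subinterval_general (a b : ℝ) (f h : ℝ → ℝ)
    (ha : 0 < a) (hab : a < b)
    (hhalf : 0 < h (1/2))
    (hhint : IntervalIntegrable h MeasureTheory.volume 0 1)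
    (hfint : IntervalIntegrable f MeasureTheory.volume a b)
    (hshc : ∀ x ∈ Set.Icc a b, ∀ y ∈ Set.Icc a b, ∀ l ∈ Set.Ioo (0:ℝ) 1,
      symTransform a b f (x * y / (l * x + (1 - l) * y)) ≤
        h l * symTransform a b f y + h (1 - l) * symTransform a b f x) :
    ∀ x ∈ Set.Icc a b, ∀ y ∈ Set.Icc a b, x ≠ y →
      1 / (4 * h (1/2)) * (f (2 * x * y / (x + y)) +
          f (2 * a * b * x * y / (2 * x * y * (a + b) - a * b * (x + y)))) ≤
        x * y / (2 * (y - x)) *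
          ((∫ t in x..y, f t / t ^ 2) +
            ∫ t in (a * b * y / ((a + b) * y - a * b))..(a * b * x / ((a + b) * x - a * b)),
              f t / t ^ 2) ∧
      x * y / (2 * (y - x)) *
          ((∫ t in x..y, f t / t ^ 2) +
            ∫ t in (a * b * y / ((a + b) * y - a * b))..(a * b * x / ((a + b) * x - a * b)),
              f t / t ^ 2) ≤
        (1/2) * (f x + f (a * b * x / ((a + b) * x - a * b)) + f y +
          f (a * b * y / ((a + b) * y - a * b))) * ∫ t in (0:ℝ)..1, h t := by
  intro x hx y hy hxy
  have hx0 := ha.trans_le hx.1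
  have hy0 := ha.trans_le hy.1
  have hb := ha.trans hab
  have hpq : y⁻¹ ≠ x⁻¹ := inv_injective.ne hxy.symm
  have hsub := uIcc_inv_subset_uIcc_inv ha hx hy
  have hconv : IsHConvexOn h (uIcc y⁻¹ x⁻¹) (fun u => symTransform a b f u⁻¹) := by
    have := IsHarmonicallyHConvexOn.comp_inv hshc fun h0 => ha.not_ge h0.1
    rw [image_inv_Icc_of_pos ha hb, ← uIcc_of_le (inv_anti₀ ha hab.le)] at this
    exact this.mono hsub
  have hint := (hfint.symTransform_comp_inv ha hab.le).mono_set hsub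
  rw [integral_div_sq_add_integral_div_sq_reflect ha hab.le hfint hx hy,
    show x * y / (2 * (y - x)) * (2 * ∫ u in y⁻¹..x⁻¹, symTransform a b f u⁻¹) =
      (x⁻¹ - y⁻¹)⁻¹ * ∫ u in y⁻¹..x⁻¹, symTransform a b f u⁻¹ by
        field_simp]
  constructor
  · have hmid := hconv.le_two_mul_average hint hpq
    rw [symTransform_inv_add_inv_div_two_inv hx0 hy0] at hmid
    rw [one_div, inv_mul_le_iff₀ (by positivity)]
    linarith
  · have hmean := hconv.average_le hint hhint hpq
    simp only [inv_inv] at hmean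
    refine hmean.trans_eq ?_
    rw [symTransform, symTransform]
    ring

/-- Hermite–Hadamard type inequalities on subintervals for symmetrized
harmonically h-convex functions. -/
theorem hermite_hadamard_h_convex_subinterval (a b : ℝ) (f h : ℝ → ℝ)
    (ha : 0 < a) (hab : a < b)
    (hh0 : ∀ t ∈ Set.Ioo (0:ℝ) 1, 0 ≤ h t)
    (hhalf : 0 < h (1/2))
    (hhint : IntervalIntegrable h MeasureTheory.volume 0 1)
    (hf0 : ∀ x ∈ Set.Icc a b, 0 ≤ f x)
    (hfint : IntervalIntegrable f MeasureTheory.volume a b)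
    (hshc : ∀ x ∈ Set.Icc a b, ∀ y ∈ Set.Icc a b, ∀ l ∈ Set.Ioo (0:ℝ) 1,
      symTransform a b f (x * y / (l * x + (1 - l) * y)) ≤
        h l * symTransform a b f y + h (1 - l) * symTransform a b f x) :
    ∀ x ∈ Set.Icc a b, ∀ y ∈ Set.Icc a b, x ≠ y →
      1 / (4 * h (1/2)) * (f (2 * x * y / (x + y)) +
          f (2 * a * b * x * y / (2 * x * y * (a + b) - a * b * (x + y)))) ≤
        x * y / (2 * (y - x)) *
          ((∫ t in x..y, f t / t ^ 2) +
            ∫ t in (a * b * y / ((a + b) * y - a * b))..(a * b * x / ((a + b) * x - a * b)),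
              f t / t ^ 2) ∧
      x * y / (2 * (y - x)) *
          ((∫ t in x..y, f t / t ^ 2) +
            ∫ t in (a * b * y / ((a + b) * y - a * b))..(a * b * x / ((a + b) * x - a * b)),
              f t / t ^ 2) ≤
        (1/2) * (f x + f (a * b * x / ((a + b) * x - a * b)) + f y +
          f (a * b * y / ((a + b) * y - a * b))) * ∫ t in (0:ℝ)..1, h t :=
  hermite_hadamard_h_convex_subinterval_general a b f h ha hab hhalf hhint hfint hshc
end
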